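/- In the homogeneous game, if λ*(s) < 1/σ² then λ*(s) < η*(s), where λ*(s) is the symmetric Nash equilibrium precision (unique minimizer of the potential) and η*(s) solves c(η) = F(1/((s−1)η)) − F(1/(sη)). Equivalently, c(λ*(s)) < F(1/((s−1)λ*(s))) − F(1/(sλ*(s))). Hence imposing the minimum precision level η*(s) strictly improves the estimation variance: 1/(s η*(s)) < 1/(s λ*(s)). -/

import Mathlib

/-!
A single agent deviating from the symmetric profile `λ*` to `μ` faces the cost
`g μ = c μ + F (1 / ((s - 1) λ* + μ))`, and the Nash condition says that `λ*` minimises `g` on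
`[0, 1/σ²]`. Since `g` is strictly convex, `λ*` is its only minimiser, so `g λ* < g 0`, which is
`c λ* < F (1 / ((s - 1) λ*)) - F (1 / (s λ*))`. The right-hand side is non-increasing in `λ*`
(a non-decreasing convex `F` grows more over longer intervals further to the right) and `c` is
non-decreasing, so the indifference point `η*` lies strictly to the right of `λ*`.
-/

open Set

/-- Cost of agent `i` in the estimation game (estimation cost `+∞` when `Σⱼλⱼ = 0`). -/
noncomputable def gameCost (s : ℕ) (c F : ℝ → ℝ) (i : Fin s) (lam : Fin s → ℝ) : EReal :=
  (c (lam i) : EReal) + (if 0 < ∑ j, lam j then ((F (1 / ∑ j, lam j) : ℝ) : EReal) else ⊤)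

lemma StrictConvexOn.lt_of_isMinOn {𝕜 E β : Type*} [Field 𝕜] [LinearOrder 𝕜]
    [IsStrictOrderedRing 𝕜] [AddCommMonoid E] [Module 𝕜 E] [AddCommMonoid β] [PartialOrder β]
    [IsOrderedAddMonoid β] [Module 𝕜 β] [PosSMulMono 𝕜 β] {s : Set E} {f : E → β} {x y : E}
    (hf : StrictConvexOn 𝕜 s f) (hmin : IsMinOn f s x) (hx : x ∈ s) (hy : y ∈ s) (hxy : x ≠ y) :
    f x < f y :=
  (hmin hy).lt_of_ne fun h => hxy <| hf.eq_of_isMinOn hmin (fun _ hz => (h ▸ hmin hz :)) hx hy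

lemma ConvexOn.map_add_map_le {s : Set ℝ} {f : ℝ → ℝ} (hf : ConvexOn ℝ s f) {a b c d : ℝ}
    (ha : a ∈ s) (hd : d ∈ s) (hab : a ≤ b) (hbd : b ≤ d) (hsum : b + c = a + d) :
    f b + f c ≤ f a + f d := by
  rcases hab.eq_or_lt with rfl | hab
  · rw [show c = d by linarith]
  rcases hbd.eq_or_lt with rfl | hbd
  · rw [show c = a by linarith, add_comm]
  have hb := hf.secant_mono_aux1 ha hd hab hbd
  have hc := hf.secant_mono_aux1 ha hd (y := c) (by linarith) (by linarith)
  have hda : 0 < d - a := by linarith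
  refine le_of_mul_le_mul_left ?_ hda
  linear_combination hb + hc + (f d - f a) * hsum

lemma ConvexOn.sub_le_sub_of_monotoneOn {s : Set ℝ} {f : ℝ → ℝ} (hf : ConvexOn ℝ s f)
    (hmono : MonotoneOn f s) {a b c d : ℝ} (ha : a ∈ s) (hd : d ∈ s) (hab : a ≤ b) (hac : a ≤ c)
    (hlen : b - a ≤ d - c) : f b - f a ≤ f d - f c := by
  have hcd : c ≤ d := by linarith
  have hz : c + (b - a) ∈ s := hf.1.ordConnected.out ha hd ⟨by linarith, by linarith⟩
  have := hf.map_add_map_le ha hz hab (c := c) (by linarith) (by ring)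
  have := hmono hz hd (by linarith)
  linarith

lemma ConvexOn.comp_one_div {F : ℝ → ℝ} (hF : ConvexOn ℝ (Ioi 0) F)
    (hmono : MonotoneOn F (Ioi 0)) : ConvexOn ℝ (Ioi 0) fun x => F (1 / x) := by
  refine ⟨convex_Ioi 0, fun x hx y hy a b ha hb hab => ?_⟩
  have hx' : 1 / x ∈ Ioi (0 : ℝ) := one_div_pos.2 (mem_Ioi.1 hx)
  have hy' : 1 / y ∈ Ioi (0 : ℝ) := one_div_pos.2 (mem_Ioi.1 hy)
  have hinv := (convexOn_zpow (-1)).2 hx hy ha hb hab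
  simp only [zpow_neg_one, ← one_div] at hinv
  calc F (1 / (a • x + b • y)) ≤ F (a • (1 / x) + b • (1 / y)) :=
        hmono (one_div_pos.2 (mem_Ioi.1 (convex_Ioi 0 hx hy ha hb hab)))
          (convex_Ioi 0 hx' hy' ha hb hab) hinv
    _ ≤ a • F (1 / x) + b • F (1 / y) := hF.2 hx' hy' ha hb hab

lemma antitoneOn_sub_comp_one_div_mul {F : ℝ → ℝ} (hF : ConvexOn ℝ (Ioi 0) F)
    (hmono : MonotoneOn F (Ioi 0)) {α β : ℝ} (hα : 0 < α) (hαβ : α ≤ β) :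
    AntitoneOn (fun p => F (1 / (α * p)) - F (1 / (β * p))) (Ioi 0) := by
  intro p (hp : 0 < p) q (hq : 0 < q) hpq
  have hβ : 0 < β := hα.trans_le hαβ
  have hgap (r : ℝ) (hr : 0 < r) : 1 / (α * r) - 1 / (β * r) = (1 / α - 1 / β) / r := by
    field_simp
  apply hF.sub_le_sub_of_monotoneOn hmono (mem_Ioi.2 (by positivity)) (mem_Ioi.2 (by positivity))
  · gcongr
  · gcongr
  · rw [hgap q hq, hgap p hp]
    have : 0 ≤ 1 / α - 1 / β := sub_nonneg.2 (one_div_le_one_div_of_le hα hαβ)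
    gcongr

lemma sum_update_const {s : ℕ} (i : Fin s) (l μ : ℝ) :
    ∑ j, Function.update (fun _ => l) i μ j = ((s : ℝ) - 1) * l + μ := by
  rw [Finset.sum_update_of_mem (Finset.mem_univ i), Finset.sum_const,
    Finset.card_sdiff_of_subset (by simp), nsmul_eq_mul]
  simp only [Finset.card_univ, Fintype.card_fin, Finset.card_singleton,
    Nat.cast_sub (Nat.one_le_of_lt i.2), Nat.cast_one]
  ring

lemma gameCost_update_const {s : ℕ} (c F : ℝ → ℝ) (i : Fin s) {l μ : ℝ}
    (hpos : 0 < ((s : ℝ) - 1) * l + μ) :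
    gameCost s c F i (Function.update (fun _ => l) i μ)
      = ((c μ + F (1 / (((s : ℝ) - 1) * l + μ)) : ℝ) : EReal) := by
  rw [gameCost, sum_update_const, if_pos hpos, Function.update_self, EReal.coe_add]

lemma isMinOn_of_symmetric_nash {s : ℕ} (hs : 1 < s) {c F : ℝ → ℝ} (i : Fin s) {l : ℝ}
    (hl : 0 < l) {S : Set ℝ} (hS : S ⊆ Ici 0)
    (hnash : ∀ μ ∈ S, gameCost s c F i (fun _ => l)
      ≤ gameCost s c F i (Function.update (fun _ => l) i μ)) :
    IsMinOn (fun μ => c μ + F (1 / (((s : ℝ) - 1) * l + μ))) S l := by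
  have hT : 0 < (s : ℝ) - 1 := sub_pos.2 (by exact_mod_cast hs)
  intro μ hμ
  have hμ0 : (0 : ℝ) ≤ μ := hS hμ
  have h := hnash μ hμ
  -- the equilibrium profile is itself the deviation to `μ = l`
  rw [← Function.update_eq_self i (fun _ => l), Function.update_idem,
    gameCost_update_const c F i (by positivity), gameCost_update_const c F i (by positivity),
    EReal.coe_le_coe_iff] at h
  exact h

theorem min_precision_strictly_improves_variance_general
    (σ2 : ℝ) (s : ℕ) (hs : 1 < s) (c F : ℝ → ℝ)
    (hc_mono : MonotoneOn c (Icc 0 (1 / σ2)))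
    (hc_sconv : StrictConvexOn ℝ (Icc 0 (1 / σ2)) c)
    (hc0 : c 0 = 0)
    (hF_mono : MonotoneOn F (Ioi 0))
    (hF_sconv : StrictConvexOn ℝ (Ioi 0) F)
    -- `λ*(s)`: the (positive) symmetric Nash equilibrium value of the unrestricted game,
    -- which is the unique minimizer of the potential
    (lamstar : ℝ) (hlamstar_pos : 0 < lamstar) (hlamstar_lt : lamstar < 1 / σ2)
    (hlamstar_NE : ∀ i : Fin s, ∀ μ ∈ Icc 0 (1 / σ2),
      gameCost s c F i (fun _ => lamstar)
        ≤ gameCost s c F i (Function.update (fun _ => lamstar) i μ))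
    -- `η*(s)`: the solution of the indifference equation
    (etastar : ℝ) (hetastar_mem : etastar ∈ Ioc 0 (1 / σ2))
    (hetastar : c etastar
      = F (1 / (((s : ℝ) - 1) * etastar)) - F (1 / ((s : ℝ) * etastar))) :
    c lamstar < F (1 / (((s : ℝ) - 1) * lamstar)) - F (1 / ((s : ℝ) * lamstar)) ∧
    lamstar < etastar ∧
    1 / ((s : ℝ) * etastar) < 1 / ((s : ℝ) * lamstar) := by
  have hs1 : (0 : ℝ) < (s : ℝ) - 1 := sub_pos.2 (by exact_mod_cast hs)
  have hT : 0 < ((s : ℝ) - 1) * lamstar := mul_pos hs1 hlamstar_pos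
  have hmin := isMinOn_of_symmetric_nash hs ⟨0, by omega⟩ hlamstar_pos Icc_subset_Ici_self
    (hlamstar_NE ⟨0, by omega⟩)
  have hconv : StrictConvexOn ℝ (Icc 0 (1 / σ2))
      (fun μ => c μ + F (1 / (((s : ℝ) - 1) * lamstar + μ))) :=
    hc_sconv.add_convexOn <| ((hF_sconv.convexOn.comp_one_div hF_mono).translate_right _).subset
      (fun μ hμ => add_pos_of_pos_of_nonneg hT hμ.1) (convex_Icc _ _)
  have hgap := hconv.lt_of_isMinOn hmin ⟨hlamstar_pos.le, hlamstar_lt.le⟩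
    ⟨le_rfl, hlamstar_pos.le.trans hlamstar_lt.le⟩ hlamstar_pos.ne'
  have hsum : ((s : ℝ) - 1) * lamstar + lamstar = s * lamstar := by ring
  simp only [hsum, hc0, add_zero, zero_add] at hgap
  have hbelow : c lamstar < F (1 / (((s : ℝ) - 1) * lamstar)) - F (1 / ((s : ℝ) * lamstar)) := by
    linarith
  have hlt : lamstar < etastar := by
    by_contra! hle
    have hc := hc_mono ⟨hetastar_mem.1.le, hetastar_mem.2⟩ ⟨hlamstar_pos.le, hlamstar_lt.le⟩ hle
    have hD := antitoneOn_sub_comp_one_div_mul hF_sconv.convexOn hF_mono hs1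
      (sub_le_self _ zero_le_one) hetastar_mem.1 hlamstar_pos hle
    simp only at hD
    linarith
  refine ⟨hbelow, hlt, ?_⟩
  gcongr

/-- in the homogeneous game with `s > 1` agents, if the symmetric Nash
equilibrium precision `λ*(s)` satisfies `λ*(s) < 1/σ²`, then
`c(λ*(s)) < F(1/((s−1)λ*(s))) − F(1/(sλ*(s)))`, hence `λ*(s) < η*(s)` where `η*(s)`
solves `c(η) = F(1/((s−1)η)) − F(1/(sη))`, and therefore imposing the minimum precision
level `η*(s)` strictly improves the estimation variance: `1/(sη*(s)) < 1/(sλ*(s))`. -/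
theorem min_precision_strictly_improves_variance
    (σ2 : ℝ) (hσ2 : 0 < σ2) (s : ℕ) (hs : 1 < s) (c F : ℝ → ℝ)
    (hc_smooth : ContDiffOn ℝ 2 c (Icc 0 (1 / σ2)))
    (hc_nonneg : ∀ x ∈ Icc 0 (1 / σ2), 0 ≤ c x)
    (hc_mono : MonotoneOn c (Icc 0 (1 / σ2)))
    (hc_sconv : StrictConvexOn ℝ (Icc 0 (1 / σ2)) c)
    (hc0 : c 0 = 0) (hc'0 : deriv c 0 = 0)
    (hF_smooth : ContDiffOn ℝ 2 F (Ioi 0))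
    (hF_nonneg : ∀ x ∈ Ioi 0, 0 ≤ F x)
    (hF_mono : MonotoneOn F (Ioi 0))
    (hF_sconv : StrictConvexOn ℝ (Ioi 0) F)
    -- `λ*(s)`: the (positive) symmetric Nash equilibrium value of the unrestricted game,
    -- which is the unique minimizer of the potential
    (lamstar : ℝ) (hlamstar_pos : 0 < lamstar) (hlamstar_lt : lamstar < 1 / σ2)
    (hlamstar_NE : ∀ i : Fin s, ∀ μ ∈ Icc 0 (1 / σ2),
      gameCost s c F i (fun _ => lamstar)
        ≤ gameCost s c F i (Function.update (fun _ => lamstar) i μ))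
    (hlamstar_unique : ∀ lam' : Fin s → ℝ, (∀ i, lam' i ∈ Icc 0 (1 / σ2)) →
      (∀ i : Fin s, ∀ μ ∈ Icc 0 (1 / σ2),
        gameCost s c F i lam' ≤ gameCost s c F i (Function.update lam' i μ)) →
      lam' = fun _ => lamstar)
    -- `η*(s)`: the solution of the indifference equation
    (etastar : ℝ) (hetastar_mem : etastar ∈ Ioc 0 (1 / σ2))
    (hetastar : c etastar
      = F (1 / (((s : ℝ) - 1) * etastar)) - F (1 / ((s : ℝ) * etastar))) :
    c lamstar < F (1 / (((s : ℝ) - 1) * lamstar)) - F (1 / ((s : ℝ) * lamstar)) ∧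
    lamstar < etastar ∧
    1 / ((s : ℝ) * etastar) < 1 / ((s : ℝ) * lamstar) :=
  min_precision_strictly_improves_variance_general σ2 s hs c F hc_mono hc_sconv hc0 hF_mono hF_sconv
    lamstar hlamstar_pos hlamstar_lt hlamstar_NE etastar hetastar_mem hetastar
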